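/- arXiv:math/9908154 — 4 statements merged into one kernel-verified Lean document; each statement's English description precedes it below -/
import Mathlib

section
/- Let ω ∈ L^1(D), let f* ∈ A^1, and let g* ∈ L^∞(D) annihilate A^1 with ‖g*‖_∞ ≤ 1. Then the following are equivalent: (a) f* is a best approximant to ω in A^1 and |∫_D g* ω dA| = inf{‖ω − f‖_1 : f ∈ A^1}; (b) there exists α ∈ ℝ such that e^{iα} g*(z)(ω(z) − f*(z)) = |ω(z) − f*(z)| for almost every z ∈ D. -/
/-!
For every `f ∈ A¹` the pairing `∫ g* (ω - f)` equals `∫ g* ω`, because `g*` annihilates `A¹`,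
and since `‖g*‖_∞ ≤ 1` it is bounded by `‖ω - f‖₁`. Hence
`|∫ g* ω| ≤ inf_f ‖ω - f‖₁ ≤ ‖ω - f*‖₁`, and (a) says exactly that the two ends agree,
i.e. that `|∫ g* h| = ∫ |h|` for `h = ω - f*`. Equality in `|∫ g* h| ≤ ∫ |g* h| ≤ ∫ |h|`
holds iff `e^{iα} g* h = |h|` almost everywhere, with `α = -arg ∫ g* h`.
-/

open MeasureTheory Metric Complex
open scoped ENNReal

/-- The normalized area measure `dA = (1/π) dx dy` on the open unit disk. -/
noncomputable def dA : Measure ℂ :=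
  (ENNReal.ofReal (1 / Real.pi)) • ((volume : Measure ℂ).restrict (ball (0 : ℂ) 1))

/-- Membership in the Bergman space `A^p`. -/
def MemAp (p : ℝ) (f : ℂ → ℂ) : Prop :=
  DifferentiableOn ℂ f (ball (0 : ℂ) 1) ∧ MemLp f (ENNReal.ofReal p) dA

lemma Complex.eq_ofReal_of_norm_le_of_re_eq {c : ℂ} {r : ℝ} (hc : ‖c‖ ≤ r) (hre : c.re = r) :
    c = r := by
  have hnorm : c.re = ‖c‖ := le_antisymm (re_le_norm c) (hre ▸ hc)
  rw [eq_re_of_ofReal_le (re_eq_norm.mp hnorm), hre]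

lemma Complex.exp_neg_arg_mul_I_mul_self (z : ℂ) : exp ((-z.arg : ℝ) * I) * z = ‖z‖ := by
  rw [← norm_mul_exp_arg_mul_I z, mul_left_comm, ← exp_add]
  simp

section Pairing

variable {X : Type*} [MeasurableSpace X] {μ : Measure X} {g h : X → ℂ}

lemma ae_norm_le_one_of_eLpNorm_top_le_one (hg : eLpNorm g ⊤ μ ≤ 1) :
    ∀ᵐ x ∂μ, ‖g x‖ ≤ 1 := by
  filter_upwards [enorm_ae_le_eLpNormEssSup g μ] with x hx
  have : ‖g x‖ₑ ≤ 1 := hx.trans (by rwa [← eLpNorm_exponent_top])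
  rwa [← ofReal_norm, ENNReal.ofReal_le_one] at this

lemma eLpNorm_one_eq_ofReal_integral_norm (hh : Integrable h μ) :
    eLpNorm h 1 μ = ENNReal.ofReal (∫ x, ‖h x‖ ∂μ) := by
  rw [eLpNorm_one_eq_lintegral_enorm, ofReal_integral_norm_eq_lintegral_enorm hh]

lemma norm_integral_mul_le_integral_norm (hg1 : ∀ᵐ x ∂μ, ‖g x‖ ≤ 1) (hh : Integrable h μ) :
    ‖∫ x, g x * h x ∂μ‖ ≤ ∫ x, ‖h x‖ ∂μ := by
  refine norm_integral_le_of_norm_le hh.norm ?_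
  filter_upwards [hg1] with x hx
  rw [norm_mul]
  exact mul_le_of_le_one_left (norm_nonneg _) hx

lemma ae_eq_ofReal_of_norm_le_of_integral_re_eq {c : X → ℂ} {r : X → ℝ} (hc : Integrable c μ)
    (hr : Integrable r μ) (hcr : ∀ᵐ x ∂μ, ‖c x‖ ≤ r x)
    (hint : ∫ x, (c x).re ∂μ = ∫ x, r x ∂μ) : ∀ᵐ x ∂μ, c x = r x := by
  have hc_re : Integrable (fun x ↦ (c x).re) μ := hc.re
  have hgap : (fun x ↦ r x - (c x).re) =ᵐ[μ] 0 := by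
    have hgap_int : Integrable (fun x ↦ r x - (c x).re) μ := hr.sub hc_re
    refine (integral_eq_zero_iff_of_nonneg_ae ?_ hgap_int).mp ?_
    · filter_upwards [hcr] with x hx
      exact sub_nonneg.mpr ((re_le_norm _).trans hx)
    · rw [integral_sub hr hc_re, hint, sub_self]
  filter_upwards [hcr, hgap] with x hx hx'
  exact eq_ofReal_of_norm_le_of_re_eq hx (sub_eq_zero.mp hx').symm

lemma norm_integral_mul_eq_integral_norm_iff (hg : AEStronglyMeasurable g μ)
    (hg1 : ∀ᵐ x ∂μ, ‖g x‖ ≤ 1) (hh : Integrable h μ) :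
    ‖∫ x, g x * h x ∂μ‖ = ∫ x, ‖h x‖ ∂μ ↔
      ∃ a : ℝ, ∀ᵐ x ∂μ, exp (a * I) * g x * h x = ‖h x‖ := by
  constructor
  · intro heq
    set J := ∫ x, g x * h x ∂μ
    have hc : Integrable (fun x ↦ exp ((-J.arg : ℝ) * I) * g x * h x) μ := by
      simpa only [mul_assoc] using (hh.bdd_mul hg hg1).const_mul _
    refine ⟨-J.arg, ae_eq_ofReal_of_norm_le_of_integral_re_eq hc hh.norm ?_ ?_⟩
    · filter_upwards [hg1] with x hx
      simp only [norm_mul, norm_exp_ofReal_mul_I, one_mul]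
      exact mul_le_of_le_one_left (norm_nonneg _) hx
    · have hre := integral_re hc
      simp only [RCLike.re_to_complex] at hre
      rw [hre]
      simp only [mul_assoc, integral_const_mul]
      rw [exp_neg_arg_mul_I_mul_self, ofReal_re, heq]
  · rintro ⟨a, ha⟩
    have hrot : exp (a * I) * ∫ x, g x * h x ∂μ = ∫ x, ‖h x‖ ∂μ := by
      rw [← integral_const_mul]
      refine (integral_congr_ae ?_).trans integral_ofReal
      filter_upwards [ha] with x hx
      rw [← mul_assoc]
      exact hx
    have hnorm := congrArg (‖·‖) hrot
    have hnonneg : 0 ≤ ∫ x, ‖h x‖ ∂μ := integral_nonneg fun x ↦ norm_nonneg (h x)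
    simpa [norm_exp_ofReal_mul_I, abs_of_nonneg hnonneg] using hnorm

end Pairing

lemma MemAp.integrable {f : ℂ → ℂ} (hf : MemAp 1 f) : Integrable f dA :=
  memLp_one_iff_integrable.mp (ENNReal.ofReal_one ▸ hf.2)

section Annihilator

variable {ω g f : ℂ → ℂ} (hω : Integrable ω dA) (hg : AEStronglyMeasurable g dA)
  (hg1 : ∀ᵐ z ∂dA, ‖g z‖ ≤ 1) (hgann : ∀ f : ℂ → ℂ, MemAp 1 f → ∫ z, f z * g z ∂dA = 0)
include hω hg hg1 hgann

lemma integral_mul_sub_of_memAp (hf : MemAp 1 f) :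
    ∫ z, g z * (ω z - f z) ∂dA = ∫ z, g z * ω z ∂dA := by
  have hgf : ∫ z, g z * f z ∂dA = 0 := by simpa only [mul_comm] using hgann f hf
  simp_rw [mul_sub]
  rw [integral_sub (hω.bdd_mul hg hg1) (hf.integrable.bdd_mul hg hg1), hgf, sub_zero]

lemma ofReal_norm_integral_mul_le_eLpNorm_sub (hf : MemAp 1 f) :
    ENNReal.ofReal ‖∫ z, g z * ω z ∂dA‖ ≤ eLpNorm (ω - f) 1 dA := by
  have hωf : Integrable (ω - f) dA := hω.sub hf.integrable
  rw [eLpNorm_one_eq_ofReal_integral_norm hωf, ← integral_mul_sub_of_memAp hω hg hg1 hgann hf]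
  exact ENNReal.ofReal_le_ofReal (norm_integral_mul_le_integral_norm hg1 hωf)

end Annihilator

/-- Duality characterization of best approximation in `A^1` (Theorem 2.2, case `p = 1`). -/
theorem stmt_1 (ω : ℂ → ℂ) (hω : MemLp ω 1 dA)
    (fstar : ℂ → ℂ) (hf : MemAp 1 fstar)
    (gstar : ℂ → ℂ) (hgmem : MemLp gstar ⊤ dA) (hgnorm : eLpNorm gstar ⊤ dA ≤ 1)
    (hgann : ∀ f : ℂ → ℂ, MemAp 1 f → ∫ z, f z * gstar z ∂dA = 0) :
    ((eLpNorm (ω - fstar) 1 dA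
        = ⨅ f : {f : ℂ → ℂ // MemAp 1 f}, eLpNorm (ω - f.1) 1 dA) ∧
      ENNReal.ofReal ‖∫ z, gstar z * ω z ∂dA‖
        = ⨅ f : {f : ℂ → ℂ // MemAp 1 f}, eLpNorm (ω - f.1) 1 dA)
    ↔ (∃ α : ℝ, ∀ᵐ z ∂dA,
        Complex.exp (α * Complex.I) * gstar z * (ω z - fstar z)
          = ((‖ω z - fstar z‖ : ℝ) : ℂ)) := by
  have hωi := memLp_one_iff_integrable.mp hω
  have hgm := hgmem.aestronglyMeasurable
  have hg1 := ae_norm_le_one_of_eLpNorm_top_le_one hgnorm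
  have hh : Integrable (ω - fstar) dA := hωi.sub hf.integrable
  set bestDist := ⨅ f : {f : ℂ → ℂ // MemAp 1 f}, eLpNorm (ω - f.1) 1 dA
  have hlow : ENNReal.ofReal ‖∫ z, gstar z * ω z ∂dA‖ ≤ bestDist :=
    le_iInf fun f ↦ ofReal_norm_integral_mul_le_eLpNorm_sub hωi hgm hg1 hgann f.2
  have hhigh : bestDist ≤ eLpNorm (ω - fstar) 1 dA :=
    iInf_le (fun f : {f : ℂ → ℂ // MemAp 1 f} ↦ eLpNorm (ω - f.1) 1 dA) ⟨fstar, hf⟩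
  have hnonneg : 0 ≤ ∫ z, ‖(ω - fstar) z‖ ∂dA := integral_nonneg fun _ ↦ norm_nonneg _
  calc _ ↔ ENNReal.ofReal ‖∫ z, gstar z * ω z ∂dA‖ = eLpNorm (ω - fstar) 1 dA := by
        refine ⟨fun ⟨hbest, hdual⟩ ↦ hdual.trans hbest.symm, fun heq ↦ ?_⟩
        have hdual := le_antisymm hlow (hhigh.trans_eq heq.symm)
        exact ⟨heq.symm.trans hdual, hdual⟩
    _ ↔ ‖∫ z, gstar z * (ω - fstar) z ∂dA‖ = ∫ z, ‖(ω - fstar) z‖ ∂dA := by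
        rw [eLpNorm_one_eq_ofReal_integral_norm hh,
          ← integral_mul_sub_of_memAp hωi hgm hg1 hgann hf,
          ENNReal.ofReal_eq_ofReal_iff (norm_nonneg _) hnonneg]
        rfl
    _ ↔ _ := norm_integral_mul_eq_integral_norm_iff hgm hg1 hh
end

section
/- Let ω ∈ L^1(D) be continuous on D (the open disk). If f₁ and f₂ are both best approximants to ω in A^1, i.e. ‖ω − f₁‖_1 = ‖ω − f₂‖_1 = inf{‖ω − f‖_1 : f ∈ A^1}, then f₁ = f₂. In other words, a continuous integrable function on the disk has a unique best approximant in the Bergman space A^1. -/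
open MeasureTheory Metric Complex
open scoped ENNReal

/-!
If `f₁` and `f₂` are best approximants, so is their midpoint, which forces equality in the
triangle inequality `‖2ω - f₁ - f₂‖ ≤ ‖ω - f₁‖ + ‖ω - f₂‖` almost everywhere; by continuity the
errors `ω - f₁` and `ω - f₂` then lie on a common ray at every point of the disk, so that
`|‖ω - f₁‖ - ‖ω - f₂‖| = |f₁ - f₂|` there. If `f₁ ≠ f₂`, the zeros of `f₁ - f₂` are isolated,
hence countable, so their complement in the disk is connected and of full measure, and the
continuous function `‖ω - f₁‖ - ‖ω - f₂‖` has a constant sign on it. Thus, say,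
`‖ω - f₁‖ = ‖ω - f₂‖ + |f₁ - f₂|` almost everywhere, and integrating with
`‖ω - f₁‖₁ = ‖ω - f₂‖₁ < ∞` gives `‖f₁ - f₂‖₁ = 0`.
-/

open Filter Set

section

variable {α E : Type*} [MeasurableSpace α] {μ : Measure α} [NormedAddCommGroup E]

theorem ae_sameRay_of_eLpNorm_add_le [NormedSpace ℝ E] [StrictConvexSpace ℝ E] {φ ψ : α → E}
    (hφ : MemLp φ 1 μ) (hψ : MemLp ψ 1 μ)
    (h : eLpNorm φ 1 μ + eLpNorm ψ 1 μ ≤ eLpNorm (φ + ψ) 1 μ) :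
    ∀ᵐ x ∂μ, SameRay ℝ (φ x) (ψ x) := by
  simp only [eLpNorm_one_eq_lintegral_enorm] at h
  rw [← lintegral_add_left' hφ.1.enorm] at h
  have hfin : ∫⁻ x, ‖(φ + ψ) x‖ₑ ∂μ ≠ ∞ := by
    simpa [eLpNorm_one_eq_lintegral_enorm] using (hφ.add hψ).eLpNorm_ne_top
  filter_upwards [ae_eq_of_ae_le_of_lintegral_le (ae_of_all _ fun x ↦ enorm_add_le (φ x) (ψ x))
    hfin (hφ.1.enorm.add hψ.1.enorm) h] with x hx
  rw [sameRay_iff_norm_add, ← ENNReal.ofReal_eq_ofReal_iff (norm_nonneg _)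
    (add_nonneg (norm_nonneg _) (norm_nonneg _)), ENNReal.ofReal_add (norm_nonneg _)
    (norm_nonneg _), ofReal_norm, ofReal_norm, ofReal_norm]
  exact hx

theorem ae_eq_zero_of_norm_eq_norm_add_norm {a b c : α → E} (hb : AEStronglyMeasurable b μ)
    (hc : AEStronglyMeasurable c μ) (h : ∀ᵐ x ∂μ, ‖a x‖ = ‖b x‖ + ‖c x‖)
    (hab : eLpNorm a 1 μ = eLpNorm b 1 μ) (hb_fin : eLpNorm b 1 μ ≠ ∞) : c =ᵐ[μ] 0 := by
  have h_enorm : ∀ᵐ x ∂μ, ‖a x‖ₑ = ‖b x‖ₑ + ‖c x‖ₑ := by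
    filter_upwards [h] with x hx
    rw [← ofReal_norm, ← ofReal_norm, ← ofReal_norm, hx,
      ENNReal.ofReal_add (norm_nonneg _) (norm_nonneg _)]
  simp only [eLpNorm_one_eq_lintegral_enorm] at hab hb_fin
  rw [lintegral_congr_ae h_enorm, lintegral_add_left' hb.enorm] at hab
  rw [← eLpNorm_eq_zero_iff hc one_ne_zero, eLpNorm_one_eq_lintegral_enorm]
  exact (ENNReal.add_right_inj hb_fin).1 (hab.trans (add_zero _).symm)

theorem ae_eq_zero_of_norm_sub_norm_eq_norm_or_eq_neg_norm {a b c : α → E} (ha : MemLp a 1 μ)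
    (hb : MemLp b 1 μ) (hc : AEStronglyMeasurable c μ) (hab : eLpNorm a 1 μ = eLpNorm b 1 μ)
    (h : (∀ᵐ x ∂μ, ‖a x‖ - ‖b x‖ = ‖c x‖) ∨ (∀ᵐ x ∂μ, ‖a x‖ - ‖b x‖ = -‖c x‖)) :
    c =ᵐ[μ] 0 := by
  rcases h with h | h
  · exact ae_eq_zero_of_norm_eq_norm_add_norm hb.1 hc (h.mono fun x hx ↦ by linarith) hab
      hb.eLpNorm_ne_top
  · exact ae_eq_zero_of_norm_eq_norm_add_norm ha.1 hc (h.mono fun x hx ↦ by linarith) hab.symm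
      ha.eLpNorm_ne_top

end

theorem sameRay_of_ae_restrict_sameRay {X E : Type*} [TopologicalSpace X] [MeasurableSpace X]
    [NormedAddCommGroup E] [NormedSpace ℝ E] [StrictConvexSpace ℝ E] {μ : Measure X}
    [μ.IsOpenPosMeasure] {U : Set X} (hU : IsOpen U) {φ ψ : X → E} (hφ : ContinuousOn φ U) (hψ : ContinuousOn ψ U)
    (h : ∀ᵐ x ∂μ.restrict U, SameRay ℝ (φ x) (ψ x)) : ∀ x ∈ U, SameRay ℝ (φ x) (ψ x) := by
  simp only [sameRay_iff_norm_add] at h ⊢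
  exact Measure.eqOn_open_of_ae_eq h hU (hφ.add hψ).norm (hφ.norm.add hψ.norm)

theorem Set.countable_diff_of_mem_codiscreteWithin {X : Type*} [TopologicalSpace X]
    [SecondCountableTopology X] {U s : Set X} (h : s ∈ codiscreteWithin U) :
    (U \ s).Countable := by
  rw [sdiff_eq_compl_inter]
  exact (HereditarilyLindelofSpace.isLindelof _).countable_of_isDiscrete
    (isDiscrete_of_codiscreteWithin (by rwa [compl_compl]))

theorem Set.Countable.isPathConnected_ball_diff_of_one_lt_rank {E : Type*}
    [NormedAddCommGroup E] [NormedSpace ℝ E] (h : 1 < Module.rank ℝ E) {S : Set E}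
    (hS : S.Countable) : IsPathConnected (ball (0 : E) 1 \ S) := by
  let e : E → E := Subtype.val ∘ Homeomorph.unitBall
  have he : range e = ball 0 1 := by
    rw [range_comp, Homeomorph.unitBall.surjective.range_eq, image_univ, Subtype.range_coe]
  have hconn : IsPathConnected (e ⁻¹' S)ᶜ :=
    (hS.preimage (Subtype.val_injective.comp Homeomorph.unitBall.injective)
      ).isPathConnected_compl_of_one_lt_rank h
  rw [← preimage_compl] at hconn
  rw [sdiff_eq, inter_comm, ← he, ← image_preimage_eq_inter_range]
  exact hconn.image (continuous_subtype_val.comp Homeomorph.unitBall.continuous)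

theorem ae_dA : ae dA = ae ((volume : Measure ℂ).restrict (ball (0 : ℂ) 1)) :=
  Measure.ae_ennreal_smul_measure_eq (by simp [Real.pi_pos]) _

theorem eqOn_ball_of_ae_dA_eq {f g : ℂ → ℂ} (hf : ContinuousOn f (ball 0 1))
    (hg : ContinuousOn g (ball 0 1)) (h : f =ᵐ[dA] g) : EqOn f g (ball 0 1) := by
  rw [EventuallyEq, ae_dA] at h
  exact Measure.eqOn_open_of_ae_eq h isOpen_ball hf hg

theorem MemAp.memLp_one {f : ℂ → ℂ} (hf : MemAp 1 f) : MemLp f 1 dA := by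
  simpa using hf.2

theorem MemAp.add {p : ℝ} {f g : ℂ → ℂ} (hf : MemAp p f) (hg : MemAp p g) : MemAp p (f + g) :=
  ⟨hf.1.add hg.1, hf.2.add hg.2⟩

theorem MemAp.const_smul {p : ℝ} {f : ℂ → ℂ} (hf : MemAp p f) (c : ℝ) : MemAp p (c • f) :=
  ⟨hf.1.const_smul c, hf.2.const_smul c⟩

theorem ae_sameRay_of_eLpNorm_sub_eq_iInf {ω f₁ f₂ : ℂ → ℂ} (hω : MemLp ω 1 dA)
    (h₁ : MemAp 1 f₁) (h₂ : MemAp 1 f₂)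
    (hb₁ : eLpNorm (ω - f₁) 1 dA = ⨅ f : {f : ℂ → ℂ // MemAp 1 f}, eLpNorm (ω - f.1) 1 dA)
    (hb₂ : eLpNorm (ω - f₂) 1 dA = ⨅ f : {f : ℂ → ℂ // MemAp 1 f}, eLpNorm (ω - f.1) 1 dA) :
    ∀ᵐ z ∂dA, SameRay ℝ (ω z - f₁ z) (ω z - f₂ z) := by
  have h_mid : eLpNorm (ω - f₁) 1 dA ≤ eLpNorm (ω - (2⁻¹ : ℝ) • (f₁ + f₂)) 1 dA :=
    hb₁ ▸ iInf_le (fun f : {f // MemAp 1 f} ↦ eLpNorm (ω - f.1) 1 dA)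
      ⟨_, (h₁.add h₂).const_smul _⟩
  have h_err : ω - (2⁻¹ : ℝ) • (f₁ + f₂) = (2⁻¹ : ℝ) • ((ω - f₁) + (ω - f₂)) := by
    ext z; simp only [Pi.sub_apply, Pi.smul_apply, Pi.add_apply]; module
  rw [h_err, eLpNorm_const_smul] at h_mid
  refine ae_sameRay_of_eLpNorm_add_le (hω.sub h₁.memLp_one) (hω.sub h₂.memLp_one) ?_
  calc eLpNorm (ω - f₁) 1 dA + eLpNorm (ω - f₂) 1 dA = 2 * eLpNorm (ω - f₁) 1 dA := by
        rw [hb₂, ← hb₁, two_mul]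
    _ ≤ 2 * (‖(2⁻¹ : ℝ)‖ₑ * eLpNorm ((ω - f₁) + (ω - f₂)) 1 dA) := by gcongr
    _ = eLpNorm ((ω - f₁) + (ω - f₂)) 1 dA := by
        rw [← mul_assoc, show ‖(2⁻¹ : ℝ)‖ₑ = 2⁻¹ by simp [enorm_eq_nnnorm],
          ENNReal.mul_inv_cancel two_ne_zero ENNReal.ofNat_ne_top, one_mul]

theorem ae_dA_eq_norm_or_eq_neg_norm {u : ℂ → ℂ} {h : ℂ → ℝ}
    (hu : ContinuousOn u (ball 0 1)) (hh : ContinuousOn h (ball 0 1))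
    (hu_ne : ∀ᶠ z in codiscreteWithin (ball (0 : ℂ) 1), u z ≠ 0)
    (h_abs : ∀ z ∈ ball (0 : ℂ) 1, |h z| = ‖u z‖) :
    (∀ᵐ z ∂dA, h z = ‖u z‖) ∨ (∀ᵐ z ∂dA, h z = -‖u z‖) := by
  set U := ball (0 : ℂ) 1 ∩ {z | u z ≠ 0} with hU
  have hU_conn : IsPreconnected U := by
    rw [hU, ← sdiff_sdiff_right_self]
    exact ((countable_diff_of_mem_codiscreteWithin hu_ne).isPathConnected_ball_diff_of_one_lt_rank
      (by simp)).isConnected.isPreconnected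
  have hU_ae : ∀ᵐ z ∂dA, z ∈ U := by
    rw [ae_dA]
    filter_upwards [ae_restrict_mem measurableSet_ball,
      ae_restrict_le_codiscreteWithin measurableSet_ball hu_ne] with z hz hz' using ⟨hz, hz'⟩
  refine (hU_conn.eq_or_eq_neg_of_sq_eq (hh.mono inter_subset_left)
    (hu.norm.mono inter_subset_left) (fun z hz ↦ by simp [← h_abs z hz.1, sq_abs])
    (fun hz ↦ norm_ne_zero_iff.2 hz.2)).imp ?_ ?_ <;>
  exact fun h_eq ↦ hU_ae.mono fun z hz ↦ h_eq hz

/-- A continuous integrable function on the open unit disk has a unique best approximant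
in the Bergman space `A^1` (Theorem 3.1). -/
theorem stmt_3 (ω : ℂ → ℂ) (hωc : ContinuousOn ω (ball (0 : ℂ) 1)) (hω : MemLp ω 1 dA)
    (f₁ f₂ : ℂ → ℂ) (h₁ : MemAp 1 f₁) (h₂ : MemAp 1 f₂)
    (hb₁ : eLpNorm (ω - f₁) 1 dA
      = ⨅ f : {f : ℂ → ℂ // MemAp 1 f}, eLpNorm (ω - f.1) 1 dA)
    (hb₂ : eLpNorm (ω - f₂) 1 dA
      = ⨅ f : {f : ℂ → ℂ // MemAp 1 f}, eLpNorm (ω - f.1) 1 dA) :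
    Set.EqOn f₁ f₂ (ball (0 : ℂ) 1) := by
  have hc₁ : ContinuousOn (ω - f₁) (ball 0 1) := hωc.sub h₁.1.continuousOn
  have hc₂ : ContinuousOn (ω - f₂) (ball 0 1) := hωc.sub h₂.1.continuousOn
  have h_ray : ∀ z ∈ ball (0 : ℂ) 1, SameRay ℝ (ω z - f₁ z) (ω z - f₂ z) := by
    have h_ae := ae_sameRay_of_eLpNorm_sub_eq_iInf hω h₁ h₂ hb₁ hb₂
    rw [Filter.Eventually, ae_dA] at h_ae
    exact sameRay_of_ae_restrict_sameRay isOpen_ball hc₁ hc₂ h_ae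
  obtain h_eq | h_ne := (h₁.1.analyticOnNhd isOpen_ball).eqOn_or_eventually_ne_of_preconnected
    (h₂.1.analyticOnNhd isOpen_ball) (convex_ball 0 1).isPreconnected
  · exact h_eq
  have h_abs : ∀ z ∈ ball (0 : ℂ) 1, |‖ω z - f₁ z‖ - ‖ω z - f₂ z‖| = ‖(f₂ - f₁) z‖ :=
    fun z hz ↦ by rw [← (h_ray z hz).norm_sub, sub_sub_sub_cancel_left, Pi.sub_apply]
  have h_diff : f₂ - f₁ =ᵐ[dA] 0 :=
    ae_eq_zero_of_norm_sub_norm_eq_norm_or_eq_neg_norm (hω.sub h₁.memLp_one)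
      (hω.sub h₂.memLp_one) (h₂.memLp_one.sub h₁.memLp_one).1 (hb₁.trans hb₂.symm)
      (ae_dA_eq_norm_or_eq_neg_norm (h₂.1.continuousOn.sub h₁.1.continuousOn)
        (hc₁.norm.sub hc₂.norm) (h_ne.mono fun z hz ↦ sub_ne_zero.2 (Ne.symm hz)) h_abs)
  exact eqOn_ball_of_ae_dA_eq h₁.1.continuousOn h₂.1.continuousOn
    ((sub_ae_eq_zero _ _).1 h_diff).symm
end

section
/- For f ∈ L^1(D), let f^♯(r) = (1/2π)∫_0^{2π} f(re^{iθ}) dθ for 0 < r < 1 denote the mean of f over the circle of radius r. Then for every harmonic function u ∈ L^1_h(D), ∫_D |f − u| dA ≥ 2 ∫_0^1 |f^♯(r) − u(0)| r dr. -/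
/-!
By the mean value property, `f♯(r) - u(0)` is the circle average of `f - u` over the circle of
radius `r`, so its modulus is at most the circle average of `|f - u|`. In polar coordinates
`dA = π⁻¹ r dr dθ`, so `∫_D |f - u| dA = 2 ∫₀¹ r · avg_r |f - u| dr`, and the inequality is the
integral of the pointwise bound. Fubini also gives what the mean value step needs: `f - u` is
integrable on almost every circle.
-/

open MeasureTheory Metric Complex
open scoped ENNReal

/-- A complex-valued function on `ℂ` is harmonic on `U` if it is `C²` there and its
Laplacian (computed with respect to the real directions `1` and `I`) vanishes on `U`. -/
def HarmonicOnC (f : ℂ → ℂ) (U : Set ℂ) : Prop :=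
  ContDiffOn ℝ 2 f U ∧ ∀ z ∈ U,
    fderiv ℝ (fun w => fderiv ℝ f w 1) z 1
      + fderiv ℝ (fun w => fderiv ℝ f w Complex.I) z Complex.I = 0

/-- The circular mean `f♯(r)` of `f` over the circle of radius `r`. -/
noncomputable def circMean (f : ℂ → ℂ) (r : ℝ) : ℂ :=
  ((1 / (2 * Real.pi) : ℝ) : ℂ) * ∫ θ in (0:ℝ)..(2 * Real.pi), f (r * Complex.exp (θ * Complex.I))

open InnerProductSpace Real Set

theorem HarmonicOnC.harmonicOnNhd {u : ℂ → ℂ} {U : Set ℂ} (hu : HarmonicOnC u U)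
    (hU : IsOpen U) : HarmonicOnNhd u U := by
  intro z hz
  refine ⟨hu.1.contDiffAt (hU.mem_nhds hz), ?_⟩
  filter_upwards [hU.mem_nhds hz] with w hw
  have hdiff : DifferentiableAt ℝ (fderiv ℝ u) w :=
    ((hu.1.contDiffAt (hU.mem_nhds hw)).fderiv_right (m := 1) le_rfl).differentiableAt
      one_ne_zero
  simp only [laplacian_eq_iteratedFDeriv_complexPlane, Pi.zero_apply, iteratedFDeriv_two_apply]
  rw [← hu.2 w hw, fderiv_clm_apply hdiff (differentiableAt_const _),
    fderiv_clm_apply hdiff (differentiableAt_const _)]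
  simp

theorem circMean_eq_circleAverage (f : ℂ → ℂ) (r : ℝ) : circMean f r = circleAverage f 0 r := by
  simp [circMean, circleAverage_def, circleMap, Complex.real_smul]

theorem circMean_sub_eq_circleAverage {f u : ℂ → ℂ} (hu : HarmonicOnC u (ball 0 1)) {r : ℝ}
    (hr : |r| < 1) (hfu : CircleIntegrable (fun z ↦ f z - u z) 0 r) :
    circMean f r - u 0 = circleAverage (fun z ↦ f z - u z) 0 r := by
  have hu_circle : HarmonicOnNhd u (closedBall 0 |r|) :=
    (hu.harmonicOnNhd isOpen_ball).mono (closedBall_subset_ball hr)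
  have hu_int : CircleIntegrable u 0 r :=
    (hu_circle.continuousOn.mono sphere_subset_closedBall).circleIntegrable'
  have hf_int : CircleIntegrable f 0 r := by
    convert hfu.add hu_int using 1
    ext z
    simp
  rw [circleAverage_fun_sub hf_int hu_int, hu_circle.circleAverage_eq, circMean_eq_circleAverage]

variable {E : Type*} [NormedAddCommGroup E]

theorem circleIntegrable_of_integrableOn_Ioo {g : ℂ → E} {c : ℂ} {r : ℝ}
    (hg : IntegrableOn (fun θ ↦ g (circleMap c r θ)) (Ioo (-π) π)) : CircleIntegrable g c r := by
  refine ((periodic_circleMap c r).comp g).intervalIntegrable two_pi_pos.ne' (t := -π) ?_ _ _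
  rw [show -π + 2 * π = π by ring,
    intervalIntegrable_iff_integrableOn_Ioo_of_le (by linarith [pi_pos])]
  exact hg

theorem integrableOn_ball_of_integrable_dA {g : ℂ → E} (hg : Integrable g dA) :
    IntegrableOn g (ball 0 1) :=
  (integrable_smul_measure (by simp [pi_pos]) ENNReal.ofReal_ne_top).1 hg

variable [NormedSpace ℝ E]

theorem integral_dA (g : ℂ → E) : ∫ z, g z ∂dA = π⁻¹ • ∫ z in ball 0 1, g z := by
  rw [dA, integral_smul_measure, ENNReal.toReal_ofReal (by positivity), one_div]

theorem norm_circleAverage_le (g : ℂ → E) (c : ℂ) (r : ℝ) :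
    ‖circleAverage g c r‖ ≤ circleAverage (fun z ↦ ‖g z‖) c r := by
  rw [circleAverage_def, circleAverage_def, norm_smul, smul_eq_mul, norm_inv,
    Real.norm_of_nonneg two_pi_pos.le]
  gcongr
  exact intervalIntegral.norm_integral_le_integral_norm two_pi_pos.le

theorem integral_Ioo_circleMap_eq_circleAverage (g : ℂ → E) (c : ℂ) (r : ℝ) :
    ∫ θ in Ioo (-π) π, g (circleMap c r θ) = (2 * π) • circleAverage g c r := by
  have hperiod := ((periodic_circleMap c r).comp g).intervalIntegral_add_eq (-π) 0
  rw [show -π + 2 * π = π by ring, zero_add] at hperiod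
  rw [circleAverage_def, smul_inv_smul₀ two_pi_pos.ne', ← integral_Ioc_eq_integral_Ioo,
    ← intervalIntegral.integral_of_le (by linarith [pi_pos])]
  exact hperiod

theorem integrableOn_polarCoord_target_iff {g : ℝ × ℝ → E} :
    IntegrableOn (fun p ↦ p.1 • g (polarCoord.symm p)) polarCoord.target ↔ Integrable g := by
  rw [← integrableOn_univ, ← integrableOn_congr_set_ae polarCoord_source_ae_eq_univ,
    ← polarCoord.symm_image_target_eq_source,
    integrableOn_image_iff_integrableOn_abs_det_fderiv_smul volume
      polarCoord.open_target.measurableSet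
      (fun p _ ↦ (hasFDerivAt_polarCoord_symm p).hasFDerivWithinAt) polarCoord.symm.injOn]
  refine integrableOn_congr_fun (fun p hp ↦ ?_) polarCoord.open_target.measurableSet
  rw [det_fderivPolarCoordSymm, abs_of_pos (show 0 < p.1 from hp.1)]

theorem polarCoord_target_inter_fst_lt (R : ℝ) :
    polarCoord.target ∩ Iio R ×ˢ univ = Ioo 0 R ×ˢ Ioo (-π) π := by
  ext ⟨r, θ⟩
  simp [polarCoord_target]
  tauto

namespace Complex

theorem integrableOn_polarCoord_target_iff {g : ℂ → E} :
    IntegrableOn (fun p ↦ p.1 • g (Complex.polarCoord.symm p)) polarCoord.target ↔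
      Integrable g := by
  rw [← (volume_preserving_equiv_real_prod.symm).integrable_comp_emb
    measurableEquivRealProd.symm.measurableEmbedding, ← _root_.integrableOn_polarCoord_target_iff]
  rfl

theorem polarCoord_symm_eq_circleMap (r θ : ℝ) :
    Complex.polarCoord.symm (r, θ) = circleMap 0 r θ := by
  simp [circleMap, Complex.exp_mul_I]

theorem polarCoord_symm_mem_ball_zero_iff {p : ℝ × ℝ} (hp : p ∈ polarCoord.target) {R : ℝ} :
    Complex.polarCoord.symm p ∈ ball (0 : ℂ) R ↔ p.1 < R := by
  rw [mem_ball_zero_iff, Complex.norm_polarCoord_symm, abs_of_pos (show 0 < p.1 from hp.1)]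

theorem eqOn_polarCoord_target_indicator_ball (g : ℂ → E) (R : ℝ) :
    EqOn (fun p : ℝ × ℝ ↦ p.1 • (ball 0 R).indicator g (Complex.polarCoord.symm p))
      ((Iio R ×ˢ univ).indicator fun p ↦ p.1 • g (Complex.polarCoord.symm p))
      polarCoord.target := by
  intro p hp
  dsimp only
  by_cases h : p.1 < R
  · rw [indicator_of_mem ((polarCoord_symm_mem_ball_zero_iff hp).2 h),
      indicator_of_mem (by simpa using h)]
  · rw [indicator_of_notMem (mt (polarCoord_symm_mem_ball_zero_iff hp).1 h),
      indicator_of_notMem (by simpa using h), smul_zero]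

theorem integrableOn_polarCoord_symm_of_integrableOn_ball {g : ℂ → E} {R : ℝ}
    (hg : IntegrableOn g (ball 0 R)) :
    IntegrableOn (fun p ↦ p.1 • g (Complex.polarCoord.symm p)) (Ioo 0 R ×ˢ Ioo (-π) π) := by
  rw [← integrable_indicator_iff measurableSet_ball, ← integrableOn_polarCoord_target_iff,
    integrableOn_congr_fun (eqOn_polarCoord_target_indicator_ball g R)
      polarCoord.open_target.measurableSet, IntegrableOn,
    integrable_indicator_iff (measurableSet_Iio.prod MeasurableSet.univ),
    IntegrableOn, Measure.restrict_restrict (measurableSet_Iio.prod MeasurableSet.univ),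
    inter_comm, polarCoord_target_inter_fst_lt] at hg
  exact hg

theorem setIntegral_ball_eq_integral_polarCoord_symm (g : ℂ → E) (R : ℝ) :
    ∫ z in ball 0 R, g z =
      ∫ p in Ioo 0 R ×ˢ Ioo (-π) π, p.1 • g (Complex.polarCoord.symm p) := by
  rw [← integral_indicator measurableSet_ball, ← Complex.integral_comp_polarCoord_symm,
    setIntegral_congr_fun polarCoord.open_target.measurableSet
      (eqOn_polarCoord_target_indicator_ball g R),
    setIntegral_indicator (measurableSet_Iio.prod MeasurableSet.univ),
    polarCoord_target_inter_fst_lt]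

end Complex

theorem integral_Ioo_smul_polarCoord_symm_eq_circleAverage (g : ℂ → E) (r : ℝ) :
    ∫ θ in Ioo (-π) π, r • g (Complex.polarCoord.symm (r, θ)) =
      (2 * π * r) • circleAverage g 0 r := by
  simp_rw [integral_smul, Complex.polarCoord_symm_eq_circleMap,
    integral_Ioo_circleMap_eq_circleAverage, smul_smul, mul_comm r]

section Ball

variable {g : ℂ → E} {R : ℝ}

theorem ae_circleIntegrable_of_integrableOn_ball (hg : IntegrableOn g (ball 0 R)) :
    ∀ᵐ r ∂volume.restrict (Ioo 0 R), CircleIntegrable g 0 r := by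
  have h := Complex.integrableOn_polarCoord_symm_of_integrableOn_ball hg
  rw [IntegrableOn, Measure.volume_eq_prod, ← Measure.prod_restrict] at h
  filter_upwards [h.prod_right_ae, ae_restrict_mem measurableSet_Ioo] with r hr hr0
  have hslice : IntegrableOn (fun θ ↦ g (circleMap 0 r θ)) (Ioo (-π) π) := by
    rw [IntegrableOn]
    simpa only [inv_smul_smul₀ hr0.1.ne', Complex.polarCoord_symm_eq_circleMap] using
      hr.fun_smul r⁻¹
  exact circleIntegrable_of_integrableOn_Ioo hslice

theorem integrableOn_smul_circleAverage_of_integrableOn_ball (hg : IntegrableOn g (ball 0 R)) :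
    IntegrableOn (fun r ↦ (2 * π * r) • circleAverage g 0 r) (Ioo 0 R) := by
  have h := Complex.integrableOn_polarCoord_symm_of_integrableOn_ball hg
  rw [IntegrableOn, Measure.volume_eq_prod, ← Measure.prod_restrict] at h
  rw [IntegrableOn]
  simpa only [integral_Ioo_smul_polarCoord_symm_eq_circleAverage] using h.integral_prod_left

theorem setIntegral_ball_eq_integral_smul_circleAverage (hg : IntegrableOn g (ball 0 R)) :
    ∫ z in ball 0 R, g z = ∫ r in Ioo 0 R, (2 * π * r) • circleAverage g 0 r := by
  rw [Complex.setIntegral_ball_eq_integral_polarCoord_symm, Measure.volume_eq_prod,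
    setIntegral_prod _ (Complex.integrableOn_polarCoord_symm_of_integrableOn_ball hg)]
  simp_rw [integral_Ioo_smul_polarCoord_symm_eq_circleAverage]

end Ball

/-- Lemma 3.4: `∫_D |f − u| dA ≥ 2 ∫₀¹ |f♯(r) − u(0)| r dr` for every `u ∈ L¹_h(D)`. -/
theorem stmt_5 (f u : ℂ → ℂ) (hf : Integrable f dA)
    (hu : HarmonicOnC u (ball (0 : ℂ) 1)) (hui : Integrable u dA) :
    2 * ∫ r in (0:ℝ)..1, ‖circMean f r - u 0‖ * r
      ≤ ∫ z, ‖f z - u z‖ ∂dA := by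
  have hg : IntegrableOn (fun z ↦ f z - u z) (ball 0 1) :=
    integrableOn_ball_of_integrable_dA (hf.sub hui)
  have hpointwise : ∀ᵐ r ∂volume.restrict (Ioo 0 1), 2 * (‖circMean f r - u 0‖ * r) ≤
      π⁻¹ * ((2 * π * r) • circleAverage (fun z ↦ ‖f z - u z‖) 0 r) := by
    filter_upwards [ae_circleIntegrable_of_integrableOn_ball hg, ae_restrict_mem measurableSet_Ioo]
      with r hgr hr
    rw [circMean_sub_eq_circleAverage hu (abs_lt.2 ⟨by linarith [hr.1], hr.2⟩) hgr, smul_eq_mul,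
      show ∀ a : ℝ, π⁻¹ * (2 * π * r * a) = 2 * (a * r) from fun a ↦ by field_simp]
    gcongr
    · exact hr.1.le
    · exact norm_circleAverage_le _ 0 r
  rw [intervalIntegral.integral_of_le zero_le_one, integral_Ioc_eq_integral_Ioo,
    ← integral_const_mul, integral_dA, smul_eq_mul,
    setIntegral_ball_eq_integral_smul_circleAverage hg.norm, ← integral_const_mul]
  refine integral_mono_of_nonneg ?_
    ((integrableOn_smul_circleAverage_of_integrableOn_ball hg.norm).const_mul _) hpointwise
  filter_upwards [ae_restrict_mem measurableSet_Ioo] with r hr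
  exact mul_nonneg zero_le_two (mul_nonneg (norm_nonneg _) hr.1.le)
end

section
/- Let p ≥ 1, let c > 0, and let f be holomorphic on D with |f(z)| ≥ c for all z ∈ D and with conj(f) ∈ L^p(D). Then ω := conj(f) is not badly approximable with respect to A^p; that is, there exists g ∈ A^p with ‖ω − g‖_p < ‖ω‖_p. -/
open MeasureTheory Metric Complex
open scoped ENNReal ComplexConjugate

section LpStrict

variable {α E F : Type*} [MeasurableSpace α] {μ : Measure α}
  [NormedAddCommGroup E] [NormedAddCommGroup F] {p : ℝ≥0∞}

theorem eLpNorm_lt_eLpNorm_of_ae_norm_lt {f : α → E} {g : α → F} (hμ : μ ≠ 0)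
    (hp0 : p ≠ 0) (hp : p ≠ ∞) (hg : MemLp g p μ) (h : ∀ᵐ x ∂μ, ‖f x‖ < ‖g x‖) :
    eLpNorm f p μ < eLpNorm g p μ := by
  have hpos : 0 < p.toReal := ENNReal.toReal_pos hp0 hp
  have h_rpow : ∀ᵐ x ∂μ, ‖f x‖ₑ ^ p.toReal < ‖g x‖ₑ ^ p.toReal := by
    filter_upwards [h] with x hx
    exact ENNReal.rpow_lt_rpow (by simpa [enorm_eq_nnnorm, ← NNReal.coe_lt_coe] using hx) hpos
  have hg_fin : ∫⁻ x, ‖g x‖ₑ ^ p.toReal ∂μ ≠ ∞ :=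
    (lintegral_rpow_enorm_lt_top_of_eLpNorm_lt_top hp0 hp hg.eLpNorm_lt_top).ne
  have hf_fin : ∫⁻ x, ‖f x‖ₑ ^ p.toReal ∂μ ≠ ∞ :=
    ne_top_of_le_ne_top hg_fin (lintegral_mono_ae (h_rpow.mono fun _ hx ↦ hx.le))
  rw [eLpNorm_eq_lintegral_rpow_enorm_toReal hp0 hp, eLpNorm_eq_lintegral_rpow_enorm_toReal hp0 hp]
  exact ENNReal.rpow_lt_rpow
    (lintegral_strict_mono hμ (hg.aestronglyMeasurable.enorm.pow_const _) hf_fin h_rpow)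
    (by positivity)

end LpStrict

theorem dA_absolutelyContinuous : dA ≪ (volume : Measure ℂ).restrict (ball (0 : ℂ) 1) :=
  Measure.smul_absolutelyContinuous

instance : IsFiniteMeasure dA := by
  constructor
  rw [dA, Measure.smul_apply, Measure.restrict_apply_univ, smul_eq_mul]
  exact ENNReal.mul_lt_top ENNReal.ofReal_lt_top measure_ball_lt_top

theorem dA_ne_zero : dA ≠ 0 := by
  rw [← Measure.measure_univ_ne_zero, dA, Measure.smul_apply,
    Measure.restrict_apply_univ, smul_eq_mul]
  exact mul_ne_zero (ENNReal.ofReal_pos.mpr (by positivity)).ne'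
    (measure_ball_pos _ _ one_pos).ne'

theorem ae_mem_ball_dA : ∀ᵐ z ∂dA, z ∈ ball (0 : ℂ) 1 :=
  dA_absolutelyContinuous.ae_le (ae_restrict_mem measurableSet_ball)

theorem memAp_of_norm_le {p : ℝ} {g : ℂ → ℂ} (hg : DifferentiableOn ℂ g (ball (0 : ℂ) 1))
    {C : ℝ} (hC : ∀ z ∈ ball (0 : ℂ) 1, ‖g z‖ ≤ C) : MemAp p g := by
  refine ⟨hg, MemLp.of_bound ?_ C (ae_mem_ball_dA.mono hC)⟩
  exact (hg.continuousOn.aestronglyMeasurable measurableSet_ball).mono_ac dA_absolutelyContinuous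

theorem norm_conj_sub_sq_div_lt {w : ℂ} {c : ℝ} (hc : 0 < c) (hw : c ≤ ‖w‖) :
    ‖conj w - (c : ℂ) ^ 2 / w‖ < ‖conj w‖ := by
  have hw0 : 0 < ‖w‖ := hc.trans_le hw
  have hsub : conj w - (c : ℂ) ^ 2 / w = ((‖w‖ ^ 2 - c ^ 2 : ℝ) : ℂ) / w := by
    field_simp [norm_pos_iff.mp hw0]
    rw [conj_mul']
    push_cast
    ring
  rw [hsub, norm_div, norm_real, Real.norm_eq_abs, norm_conj,
    abs_of_nonneg (by nlinarith), div_lt_iff₀ hw0]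
  nlinarith

theorem norm_sq_div_le {w : ℂ} {c : ℝ} (hc : 0 < c) (hw : c ≤ ‖w‖) :
    ‖(c : ℂ) ^ 2 / w‖ ≤ c := by
  rw [norm_div, norm_pow, norm_real, Real.norm_eq_abs, abs_of_pos hc,
    div_le_iff₀ (hc.trans_le hw), sq]
  gcongr

/-- Proposition 5.2: if `f` is holomorphic on the disk with `|f| ≥ c > 0`, then
`ω = conj(f)` is not badly approximable in `L^p` with respect to `A^p`. -/
theorem stmt_10 (p : ℝ) (hp : 1 ≤ p) (c : ℝ) (hc : 0 < c) (f : ℂ → ℂ)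
    (hf : DifferentiableOn ℂ f (ball (0 : ℂ) 1))
    (hlb : ∀ z ∈ ball (0 : ℂ) 1, c ≤ ‖f z‖)
    (ω : ℂ → ℂ) (hω : ∀ z : ℂ, ω z = starRingEnd ℂ (f z))
    (hmem : MemLp ω (ENNReal.ofReal p) dA) :
    ∃ g : ℂ → ℂ, MemAp p g ∧
      eLpNorm (ω - g) (ENNReal.ofReal p) dA < eLpNorm ω (ENNReal.ofReal p) dA := by
  have hf0 : ∀ z ∈ ball (0 : ℂ) 1, f z ≠ 0 := fun z hz ↦
    norm_pos_iff.mp (hc.trans_le (hlb z hz))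
  refine ⟨fun z ↦ (c : ℂ) ^ 2 / f z,
    memAp_of_norm_le ((differentiableOn_const _).div hf hf0)
      fun z hz ↦ norm_sq_div_le hc (hlb z hz), ?_⟩
  refine eLpNorm_lt_eLpNorm_of_ae_norm_lt dA_ne_zero (ENNReal.ofReal_pos.mpr (by linarith)).ne'
    ENNReal.ofReal_ne_top hmem ?_
  filter_upwards [ae_mem_ball_dA] with z hz
  simpa only [Pi.sub_apply, hω] using norm_conj_sub_sq_div_lt hc (hlb z hz)
end
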